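/- arXiv:2410.18799 — 5 statements merged into one kernel-verified Lean document; each statement's English description precedes it below -/
import Mathlib

section
/- Let T be a tree not accepted by the automaton A_{▷E} (which requires the successors of the root to be accepted in each state of the multiset E, with remaining successors unconstrained). Then there exists a submultiset F ⊑ E and a state g ∈ E \ F such that T is accepted by A_{▷F} and T is rejected by A_{▷(F ⊎ {g})}. -/
/-- A `Σ`-labelled tree of arbitrary (finite) arity over direction set `D`:
a prefix-closed set of nodes (words over `D`) containing the root, with a labelling. -/
structure STree (D : Type) (A : Type) where
  nodes : Set (List D)
  root_mem : ([] : List D) ∈ nodes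
  prefix_closed : ∀ n d, n ++ [d] ∈ nodes → n ∈ nodes
  label : List D → A

/-- Positive Boolean combinations over atoms `α`. -/
inductive PBF (α : Type) : Type
  | tru : PBF α
  | fls : PBF α
  | atom : α → PBF α
  | and : PBF α → PBF α → PBF α
  | or : PBF α → PBF α → PBF α

def PBF.map {α β : Type} (f : α → β) : PBF α → PBF β
  | .tru => .tru
  | .fls => .fls
  | .atom a => .atom (f a)
  | .and φ ψ => .and (φ.map f) (ψ.map f)
  | .or φ ψ => .or (φ.map f) (ψ.map f)

/-- An EU-pair over state set `Q`: a multiset `E` of states and a set `U` of states. -/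
abbrev EUPair (Q : Type) := Multiset Q × Set Q

def EUPair.map {Q Q' : Type} (f : Q → Q') (p : EUPair Q) : EUPair Q' :=
  (p.1.map f, f '' p.2)

/-- The marking `ν` of the `children` satisfies the EU-pair `p` (relation `⊨⁺`):
some unitary submarking `f` of `ν` matches the existential part `p.1` on a family
`m` of pairwise distinct children and maps every other child into `p.2`. -/
def SatEU {D Q : Type} (children : Set D) (ν : D → Set Q) (p : EUPair Q) : Prop :=
  ∃ f : D → Q, (∀ d ∈ children, f d ∈ ν d) ∧
    ∃ m : Multiset D, m.Nodup ∧ (∀ d ∈ m, d ∈ children) ∧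
      m.map f = p.1 ∧ ∀ d ∈ children, d ∉ m → f d ∈ p.2

/-- `⊨⁺` extended to positive Boolean combinations of EU-pairs. -/
def SatPBF {D Q : Type} (children : Set D) (ν : D → Set Q) : PBF (EUPair Q) → Prop
  | .tru => True
  | .fls => False
  | .atom p => SatEU children ν p
  | .and φ ψ => SatPBF children ν φ ∧ SatPBF children ν ψ
  | .or φ ψ => SatPBF children ν φ ∨ SatPBF children ν ψ

/-- Alternating EU parity tree automaton over alphabet `A`. -/
structure APTA (A : Type) where
  Q : Type
  init : Q
  δ : Q → A → PBF (EUPair Q)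
  ω : Q → ℕ

/-- Parity acceptance for an infinite sequence of priorities: the least priority
occurring infinitely often is even. -/
def ParitySeq (s : ℕ → ℕ) : Prop :=
  Even (sInf {c | {k | s k = c}.Infinite})

namespace APTA

variable {A D : Type}

/-- The automaton state attached to a node of an execution tree. -/
def stateOf (M : APTA A) (e : List (D × M.Q)) : M.Q :=
  match e.getLast? with
  | none => M.init
  | some p => p.2

/-- `et` is an execution tree of `M` over the input tree `T`: a prefix-closed set of
words over `D × Q`, rooted at `[]` (in state `init`), projecting into `T`,
whose induced markings satisfy the transition function everywhere. -/
def IsExecTree (M : APTA A) (T : STree D A) (et : Set (List (D × M.Q))) : Prop :=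
  ([] ∈ et) ∧ (∀ e p, e ++ [p] ∈ et → e ∈ et) ∧
  (∀ e ∈ et, e.map Prod.fst ∈ T.nodes) ∧
  (∀ e ∈ et,
    SatPBF {d | (e.map Prod.fst) ++ [d] ∈ T.nodes}
      (fun d => {q | e ++ [(d, q)] ∈ et})
      (M.δ (M.stateOf e) (T.label (e.map Prod.fst))))

/-- `T` is accepted by `M`: some execution tree all of whose infinite branches
satisfy the parity condition. (Finite branches are accepting.) -/
def Accepts (M : APTA A) (T : STree D A) : Prop :=
  ∃ et : Set (List (D × M.Q)), M.IsExecTree T et ∧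
    ∀ b : ℕ → D × M.Q, (∀ k, (List.range k).map b ∈ et) →
      ParitySeq (fun k => M.ω (b k).2)

/-- The automaton `M` with initial state replaced by `q`. -/
def withInit (M : APTA A) (q : M.Q) : APTA A := { M with init := q }

end APTA

/-- The subtree of `T` rooted at node `n0`. -/
def STree.subAt {D A : Type} (T : STree D A) (n0 : List D) (h : n0 ∈ T.nodes) :
    STree D A where
  nodes := {m | n0 ++ m ∈ T.nodes}
  root_mem := by simpa using h
  prefix_closed := by
    intro n d hm
    have hm' : (n0 ++ n) ++ [d] ∈ T.nodes := by
      simpa [List.append_assoc] using hm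
    exact T.prefix_closed (n0 ++ n) d hm'
  label := fun m => T.label (n0 ++ m)

/-- The subtree of `T` rooted at the successor `d` of the root is accepted by `M`
started in state `q` (false when `d` is not a successor of the root). -/
def AccChild {A D : Type} (M : APTA A) (q : M.Q) (T : STree D A) (d : D) : Prop :=
  ∃ h : [d] ∈ T.nodes, (M.withInit q).Accepts (T.subAt [d] h)

/-- The automaton `A_{▷E}`: a fresh initial state whose transition (on every letter)
is the EU-pair `⟨E;{q⊤}⟩`, the rest of `M` unchanged. -/
def arrow {A : Type} (M : APTA A) (qT : M.Q) (E : Multiset M.Q) : APTA A where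
  Q := Option M.Q
  init := none
  δ := fun q a =>
    match q with
    | none => PBF.atom (E.map some, ({some qT} : Set (Option M.Q)))
    | some q => (M.δ q a).map (EUPair.map some)
  ω := fun q =>
    match q with
    | none => 0
    | some q => M.ω q

/-- The automaton `A_{▷⟨E;U⟩}`: fresh initial state with transition `⟨E;U⟩`. -/
def arrowEU {A : Type} (M : APTA A) (E : Multiset M.Q) (U : Set M.Q) : APTA A where
  Q := Option M.Q
  init := none
  δ := fun q a =>
    match q with
    | none => PBF.atom (E.map some, some '' U)
    | some q => (M.δ q a).map (EUPair.map some)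
  ω := fun q =>
    match q with
    | none => 0
    | some q => M.ω q

/-- A witness (minimal accepting execution tree, restricted to the root level) for
`A_{▷F}` on `T`: pairwise-distinct successors of the root matched with the states
of `F`, each accepting the corresponding subtree. -/
def Witness {A D : Type} (M : APTA A) (T : STree D A) (F : Multiset M.Q)
    (m : Multiset (D × M.Q)) : Prop :=
  (m.map Prod.fst).Nodup ∧ m.map Prod.snd = F ∧ ∀ p ∈ m, AccChild M p.2 T p.1

/-!
Since `q⊤` accepts every tree, so does `A_{▷∅}`: below the root, run `A` from `q⊤` on every
subtree. Acceptance of `A_{▷F}` thus holds at `F = 0` and fails at `F = E`; adding the states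
of `E` to `F` one at a time, it fails for the first time at some step `F ↦ F + {g}`, and that
step is the blocking pair.
-/

theorem paritySeq_comp_succ_iff {s : ℕ → ℕ} : ParitySeq (fun k => s (k + 1)) ↔ ParitySeq s := by
  have key : ∀ c, {k | s (k + 1) = c}.Infinite ↔ {k | s k = c}.Infinite := fun c => by
    rw [← Nat.frequently_atTop_iff_infinite, ← Nat.frequently_atTop_iff_infinite]
    have h := Filter.frequently_map (f := Filter.atTop) (m := fun k => k + 1) (P := (s · = c))
    rw [Filter.map_add_atTop_eq_nat 1] at h
    exact h.symm
  simp only [ParitySeq, key]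

theorem SatPBF.map {D Q Q' : Type} {ch : Set D} {ν : D → Set Q} {ν' : D → Set Q'} (f : Q → Q')
    (hν : ∀ d ∈ ch, f '' ν d ⊆ ν' d) :
    ∀ {φ : PBF (EUPair Q)}, SatPBF ch ν φ → SatPBF ch ν' (φ.map (EUPair.map f))
  | .tru, h => h
  | .fls, h => h
  | .atom _, ⟨g, hg, m, hnd, hm, hmap, hU⟩ =>
    ⟨f ∘ g, fun d hd => hν d hd ⟨g d, hg d hd, rfl⟩, m, hnd, hm,
      by rw [← Multiset.map_map, hmap]; rfl, fun d hd hdm => ⟨g d, hU d hd hdm, rfl⟩⟩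
  | .and _ _, h => ⟨SatPBF.map f hν h.1, SatPBF.map f hν h.2⟩
  | .or _ _, .inl h => .inl (SatPBF.map f hν h)
  | .or _ _, .inr h => .inr (SatPBF.map f hν h)

theorem APTA.stateOf_append_singleton {A D : Type} (M : APTA A) (e : List (D × M.Q))
    (p : D × M.Q) : M.stateOf (e ++ [p]) = p.2 := by
  simp [APTA.stateOf]

def unlift {D Q : Type} (q₀ : Q) (p : D × Option Q) : D × Q := (p.1, p.2.getD q₀)

theorem some_unlift_snd {D Q : Type} (q₀ : Q) {p : D × Option Q} (h : p.2.isSome) :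
    some (unlift q₀ p).2 = p.2 := by
  obtain ⟨x, hx⟩ := Option.isSome_iff_exists.1 h
  simp [unlift, hx]

theorem map_fst_map_unlift {D Q : Type} (q₀ : Q) (l : List (D × Option Q)) :
    (l.map (unlift q₀)).map Prod.fst = l.map Prod.fst := by
  simp only [List.map_map]
  rfl

theorem SatEU.mono {D Q : Type} {ch : Set D} {ν ν' : D → Set Q} {p : EUPair Q}
    (h : SatEU ch ν p) (hν : ∀ d ∈ ch, ν d ⊆ ν' d) : SatEU ch ν' p :=
  let ⟨f, hf, rest⟩ := h
  ⟨f, fun d hd => hν d hd (hf d hd), rest⟩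

theorem stateOf_arrow_cons {A D : Type} {M : APTA A} (qT : M.Q) (F : Multiset M.Q) (d : D)
    (q : M.Q) {l : List (D × Option M.Q)} (hl : ∀ p ∈ l, p.2.isSome) :
    (arrow M qT F).stateOf ((d, some q) :: l) =
      some ((M.withInit q).stateOf (l.map (unlift q))) := by
  rcases List.eq_nil_or_concat l with rfl | ⟨l, p, rfl⟩
  · rfl
  · have h1 : (arrow M qT F).stateOf ((d, some q) :: (l ++ [p])) = p.2 :=
      (arrow M qT F).stateOf_append_singleton ((d, some q) :: l) p
    have h2 : (M.withInit q).stateOf ((l ++ [p]).map (unlift q)) = (unlift q p).2 :=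
      (congrArg (M.withInit q).stateOf (List.map_append ..)).trans
        ((M.withInit q).stateOf_append_singleton _ _)
    rw [List.concat_eq_append, h1, h2]
    exact (some_unlift_snd q (hl p (by simp))).symm

section Graft

variable {A D : Type} {M : APTA A} {T : STree D A} (s : D → M.Q)
  (run : ∀ d, [d] ∈ T.nodes → Set (List (D × M.Q)))

/-- States below the root are `some q`; `unlift` strips the `some` (its default is never used). -/
def graftRun : Set (List (D × Option M.Q)) := fun l =>
  match l with
  | [] => True
  | x :: l => ∃ hd : [x.1] ∈ T.nodes, x.2 = some (s x.1) ∧ (∀ p ∈ l, p.2.isSome) ∧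
      l.map (unlift (s x.1)) ∈ run x.1 hd

theorem mem_graftRun_of_append (hrun : ∀ d hd, ∀ e p, e ++ [p] ∈ run d hd → e ∈ run d hd)
    {e : List (D × Option M.Q)} {p : D × Option M.Q} (he : e ++ [p] ∈ graftRun s run) :
    e ∈ graftRun s run := by
  obtain _ | ⟨⟨d, o⟩, l⟩ := e
  · trivial
  · obtain ⟨hd, ho, hsome, hmem⟩ := he
    refine ⟨hd, ho, fun x hx => hsome x (List.mem_append_left _ hx),
      hrun d hd _ (unlift (s d) p) ?_⟩
    simpa using hmem

theorem map_fst_mem_of_mem_graftRun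
    (hrun : ∀ d hd, ∀ e ∈ run d hd, e.map Prod.fst ∈ (T.subAt [d] hd).nodes)
    {e : List (D × Option M.Q)} (he : e ∈ graftRun s run) : e.map Prod.fst ∈ T.nodes := by
  obtain _ | ⟨⟨d, o⟩, l⟩ := e
  · exact T.root_mem
  · obtain ⟨hd, -, -, hmem⟩ := he
    have h : [d] ++ (l.map (unlift (s d))).map Prod.fst ∈ T.nodes := hrun d hd _ hmem
    rwa [map_fst_map_unlift] at h

theorem satPBF_graftRun_cons (qT : M.Q) (F : Multiset M.Q)
    (hrun : ∀ d hd, (M.withInit (s d)).IsExecTree (T.subAt [d] hd) (run d hd))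
    {d : D} {l : List (D × Option M.Q)} (he : (d, some (s d)) :: l ∈ graftRun s run) :
    SatPBF {d' | ((d, some (s d)) :: l).map Prod.fst ++ [d'] ∈ T.nodes}
      (fun d' => {o : Option M.Q | ((d, some (s d)) :: l) ++ [(d', o)] ∈ graftRun s run})
      ((arrow M qT F).δ ((arrow M qT F).stateOf ((d, some (s d)) :: l))
        (T.label (((d, some (s d)) :: l).map Prod.fst))) := by
  obtain ⟨hd, -, hsome, hmem⟩ := he
  have h : SatPBF {d' | [d] ++ ((l.map (unlift (s d))).map Prod.fst ++ [d']) ∈ T.nodes}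
      (fun d' => {q : M.Q | l.map (unlift (s d)) ++ [(d', q)] ∈ run d hd})
      (M.δ ((M.withInit (s d)).stateOf (l.map (unlift (s d))))
        (T.label ([d] ++ (l.map (unlift (s d))).map Prod.fst))) :=
    (hrun d hd).2.2.2 _ hmem
  rw [map_fst_map_unlift] at h
  rw [stateOf_arrow_cons qT F d (s d) hsome]
  refine SatPBF.map some (fun d' _ => ?_) h
  rintro _ ⟨q, hq, rfl⟩
  change (d, some (s d)) :: (l ++ [(d', some q)]) ∈ graftRun s run
  refine ⟨hd, rfl, ?_, by simpa [unlift] using hq⟩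
  rintro p hp
  rcases List.mem_append.1 hp with hp | hp
  · exact hsome p hp
  · rw [List.mem_singleton.1 hp]
    rfl

theorem isExecTree_graftRun (qT : M.Q) (F : Multiset M.Q)
    (hrun : ∀ d hd, (M.withInit (s d)).IsExecTree (T.subAt [d] hd) (run d hd))
    (hroot : SatEU {d | [d] ∈ T.nodes} (fun d => {some (s d)}) (F.map some, {some qT})) :
    (arrow M qT F).IsExecTree T (graftRun s run) := by
  refine ⟨trivial, fun e p => mem_graftRun_of_append s run (fun d hd => (hrun d hd).2.1),
    fun e => map_fst_mem_of_mem_graftRun s run (fun d hd => (hrun d hd).2.2.1), ?_⟩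
  rintro (_ | ⟨⟨d, o⟩, l⟩) he
  · refine hroot.mono fun d hd => ?_
    rintro _ rfl
    exact ⟨hd, rfl, nofun, (hrun d hd).1⟩
  · obtain ⟨-, ho : o = some (s d), -⟩ := id he
    subst ho
    exact satPBF_graftRun_cons s run qT F hrun he

theorem graftRun_branch {b : ℕ → D × Option M.Q}
    (hb : ∀ k, (List.range k).map b ∈ graftRun s run) :
    ∃ hd : [(b 0).1] ∈ T.nodes, ∀ k, (b (k + 1)).2.isSome ∧
      (List.range k).map (fun i => unlift (s (b 0).1) (b (i + 1))) ∈ run _ hd := by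
  have hcons : ∀ k, b 0 :: (List.range k).map (fun i => b (i + 1)) ∈ graftRun s run := by
    intro k
    simpa [List.range_succ_eq_map, List.map_map, Function.comp_def] using hb (k + 1)
  obtain ⟨hd, -⟩ := hcons 0
  refine ⟨hd, fun k => ⟨?_, ?_⟩⟩
  · obtain ⟨-, -, hsome, -⟩ := hcons (k + 1)
    exact hsome _ (List.mem_map.2 ⟨k, List.mem_range.2 k.lt_succ_self, rfl⟩)
  · obtain ⟨_, -, -, hmem⟩ := hcons k
    simpa [List.map_map, Function.comp_def] using hmem

end Graft

theorem arrow_accepts_of_accepts_children {A D : Type} {M : APTA A} {T : STree D A}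
    (qT : M.Q) (F : Multiset M.Q) (s : D → M.Q)
    (hchild : ∀ d (hd : [d] ∈ T.nodes), (M.withInit (s d)).Accepts (T.subAt [d] hd))
    (hroot : SatEU {d | [d] ∈ T.nodes} (fun d => {some (s d)}) (F.map some, {some qT})) :
    (arrow M qT F).Accepts T := by
  choose run hrun hpar using hchild
  refine ⟨graftRun s run, isExecTree_graftRun s run qT F hrun hroot, fun b hb => ?_⟩
  obtain ⟨hd, hbranch⟩ := graftRun_branch s run hb
  rw [← paritySeq_comp_succ_iff]
  convert hpar _ hd _ (fun k => (hbranch k).2) using 2 with k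
  exact (congrArg (arrow M qT F).ω (some_unlift_snd (s (b 0).1) (hbranch k).1)).symm

theorem arrow_zero_accepts {A D : Type} {M : APTA A} (qT : M.Q)
    (hqT : ∀ T' : STree D A, (M.withInit qT).Accepts T') (T : STree D A) :
    (arrow M qT 0).Accepts T :=
  arrow_accepts_of_accepts_children qT 0 (fun _ => qT) (fun _ _ => hqT _)
    ⟨fun _ => some qT, fun _ _ => rfl, 0, Multiset.nodup_zero, by simp, by simp, fun _ _ _ => rfl⟩

theorem Multiset.exists_le_mem_sub_not_add_singleton {α : Type*} [DecidableEq α]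
    {p : Multiset α → Prop} (h0 : p 0) {E : Multiset α} (hE : ¬ p E) :
    ∃ F, F ≤ E ∧ ∃ g, g ∈ E - F ∧ p F ∧ ¬ p (F + {g}) := by
  induction E using Multiset.induction_on with
  | empty => exact absurd h0 hE
  | cons a E ih =>
    by_cases hpE : p E
    · refine ⟨E, Multiset.le_cons_self E a, a, ?_, hpE, ?_⟩
      · rw [← Multiset.singleton_add, add_tsub_cancel_right]
        exact Multiset.mem_singleton_self a
      · rwa [add_comm, Multiset.singleton_add]
    · obtain ⟨F, hFE, g, hg, hF, hFg⟩ := ih hpE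
      exact ⟨F, hFE.trans (Multiset.le_cons_self E a), g,
        Multiset.mem_of_le (tsub_le_tsub_right (Multiset.le_cons_self E a) F) hg, hF, hFg⟩

/-- if a tree `T` is not accepted by `A_{▷E}` (where `q⊤` is a state of
`M` accepting every tree), then there is a blocking pair: a submultiset `F ⊑ E` and a
state `g ∈ E ∖ F` with `T` accepted by `A_{▷F}` and rejected by `A_{▷(F ⊎ {g})}`. -/
theorem stmt6 (A D : Type) (M : APTA A) [DecidableEq M.Q] (qT : M.Q)
    (hqT : ∀ (D' : Type) (T' : STree D' A), (M.withInit qT).Accepts T')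
    (T : STree D A) (E : Multiset M.Q)
    (h : ¬ (arrow M qT E).Accepts T) :
    ∃ F, F ≤ E ∧ ∃ g, g ∈ E - F ∧
      (arrow M qT F).Accepts T ∧ ¬ (arrow M qT (F + {g})).Accepts T :=
  Multiset.exists_le_mem_sub_not_add_singleton (arrow_zero_accepts qT (hqT D) T) h
end

section
/- The number N of EU-pairs in the disjunction C(⟨E₁;U₁⟩, ⟨E₂;U₂⟩) replacing a conjunction of two EU-pairs of sizes (n₁,m₁) and (n₂,m₂) with n₁ ≤ n₂ satisfies N ≤ Σ_{l=0}^{n₁} C(n₁,l)·C(n₂,l)·l!·m₂^{n₁−l}·m₁^{n₂−l} ≤ (n₂+1)^{n₁} · m₂^{n₁} · m₁^{n₂}. -/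
/-- bound on the number `N` of EU-pairs in the disjunction
`C(⟨E₁;U₁⟩,⟨E₂;U₂⟩)` replacing a conjunction of two EU-pairs of sizes `(n₁,m₁)`
and `(n₂,m₂)` with `n₁ ≤ n₂`:
`∑_{l=0}^{n₁} C(n₁,l)·C(n₂,l)·l!·m₂^{n₁−l}·m₁^{n₂−l} ≤ (n₂+1)^{n₁}·m₂^{n₁}·m₁^{n₂}`. -/
theorem stmt11 (n₁ n₂ m₁ m₂ : ℕ) (h : n₁ ≤ n₂) (hm₁ : 1 ≤ m₁) (hm₂ : 1 ≤ m₂) :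
    ∑ l ∈ Finset.range (n₁ + 1),
      Nat.choose n₁ l * Nat.choose n₂ l * Nat.factorial l *
        m₂ ^ (n₁ - l) * m₁ ^ (n₂ - l)
      ≤ (n₂ + 1) ^ n₁ * m₂ ^ n₁ * m₁ ^ n₂ := by
  have key : ∀ l ∈ Finset.range (n₁ + 1),
      Nat.choose n₁ l * Nat.choose n₂ l * Nat.factorial l *
        m₂ ^ (n₁ - l) * m₁ ^ (n₂ - l)
      ≤ Nat.choose n₁ l * n₂ ^ l * m₂ ^ n₁ * m₁ ^ n₂ := by
    intro l _
    have h1 : Nat.choose n₂ l * Nat.factorial l ≤ n₂ ^ l := by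
      rw [Nat.mul_comm, ← Nat.descFactorial_eq_factorial_mul_choose]
      exact Nat.descFactorial_le_pow _ _
    have h2 : m₂ ^ (n₁ - l) ≤ m₂ ^ n₁ := Nat.pow_le_pow_right hm₂ (Nat.sub_le _ _)
    have h3 : m₁ ^ (n₂ - l) ≤ m₁ ^ n₂ := Nat.pow_le_pow_right hm₁ (Nat.sub_le _ _)
    calc Nat.choose n₁ l * Nat.choose n₂ l * Nat.factorial l * m₂ ^ (n₁ - l) * m₁ ^ (n₂ - l)
        = Nat.choose n₁ l * (Nat.choose n₂ l * Nat.factorial l) * m₂ ^ (n₁ - l) * m₁ ^ (n₂ - l) := by ring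
      _ ≤ Nat.choose n₁ l * n₂ ^ l * m₂ ^ n₁ * m₁ ^ n₂ := by
          exact Nat.mul_le_mul (Nat.mul_le_mul (Nat.mul_le_mul_left _ h1) h2) h3
  calc ∑ l ∈ Finset.range (n₁ + 1),
      Nat.choose n₁ l * Nat.choose n₂ l * Nat.factorial l * m₂ ^ (n₁ - l) * m₁ ^ (n₂ - l)
      ≤ ∑ l ∈ Finset.range (n₁ + 1), Nat.choose n₁ l * n₂ ^ l * m₂ ^ n₁ * m₁ ^ n₂ :=
        Finset.sum_le_sum key
    _ = (∑ l ∈ Finset.range (n₁ + 1), n₂ ^ l * 1 ^ (n₁ - l) * Nat.choose n₁ l) * (m₂ ^ n₁ * m₁ ^ n₂) := by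
        rw [Finset.sum_mul]; apply Finset.sum_congr rfl; intro l _; ring
    _ = (n₂ + 1) ^ n₁ * m₂ ^ n₁ * m₁ ^ n₂ := by
        have hb := add_pow n₂ 1 n₁
        simp only [Nat.cast_id] at hb
        rw [← hb]; ring
end

section
/- Two-player turn-based parity games are positionally determined: from every state of the game, exactly one of the two players has a memoryless winning strategy. -/
/-- A two-player turn-based parity game: states partitioned between Player 0
(`owner v = false`) and Player 1 (`owner v = true`), an edge relation and a
priority function. -/
structure ParityGame where
  V : Type
  owner : V → Bool
  R : V → V → Prop
  ω : V → ℕ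

namespace ParityGame

/-- A strategy for player `b`: from any history and any current state owned by
`b` that has a successor, it selects a successor. -/
structure Strategy (G : ParityGame) (b : Bool) where
  next : List G.V → G.V → G.V
  valid : ∀ h v, G.owner v = b → (∃ w, G.R v w) → G.R v (next h v)

/-- A strategy is memoryless if it only depends on the current state. -/
def Strategy.Memoryless {G : ParityGame} {b : Bool} (σ : G.Strategy b) : Prop :=
  ∀ h h' v, σ.next h v = σ.next h' v

/-- The history (list of previously visited states) of a play after `n` steps. -/
def hist (G : ParityGame) (p : ℕ → Option G.V) (n : ℕ) : List G.V :=
  (List.range n).filterMap p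

/-- `p` is a maximal play from `y` in which player `b` follows strategy `σ`
(plays are encoded as `ℕ → Option G.V`, with `none` after a finite play ends;
a play ends exactly in states with no outgoing edge). -/
def IsPlayFor (G : ParityGame) (b : Bool) (σ : G.Strategy b) (y : G.V)
    (p : ℕ → Option G.V) : Prop :=
  p 0 = some y ∧
  (∀ n v, p n = some v → (p (n + 1) = none ↔ ¬ ∃ w, G.R v w)) ∧
  (∀ n, p n = none → p (n + 1) = none) ∧
  (∀ n v w, p n = some v → p (n + 1) = some w → G.R v w) ∧
  (∀ n v w, p n = some v → p (n + 1) = some w → G.owner v = b →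
    w = σ.next (G.hist p n) v)

/-- The maximal play `p` is winning for player `b`: if it is finite, its last
state belongs to the opponent (the blocked player loses); if it is infinite,
the least priority occurring infinitely often is even iff `b` is Player 0. -/
def WinsPlay (G : ParityGame) (b : Bool) (p : ℕ → Option G.V) : Prop :=
  (∀ n v, p n = some v → p (n + 1) = none → G.owner v ≠ b) ∧
  ((∀ n, (p n).isSome) →
    (Even (sInf {c | {n | ∃ v, p n = some v ∧ G.ω v = c}.Infinite}) ↔ b = false))

/-- `σ` is winning for player `b` from `y`: every maximal play from `y`
compatible with `σ` is winning for `b`. -/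
def WinningFrom (G : ParityGame) (b : Bool) (σ : G.Strategy b) (y : G.V) : Prop :=
  ∀ p : ℕ → Option G.V, G.IsPlayFor b σ y p → G.WinsPlay b p

end ParityGame

/-!
Player 0's winning region is the nested fixpoint `νX₀ μX₁ νX₂ ⋯` of the controllable-predecessor
operator in which a state of priority `q` must move into `X_q`. Unfolding the least fixpoints
through their ordinal approximants assigns to each state of the region a signature, the
lexicographically least tuple of stages at the odd priorities: some successor (for Player 0)
or every successor (for Player 1) has a signature that does not increase on the priorities
`≤ q`, and strictly decreases there when `q` is odd. Choosing such a successor is a memoryless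
strategy, and along a play consistent with it an odd least recurring priority would give an
infinite descending chain of signatures. The complement of the region is the same fixpoint for
the dual game (players swapped, priorities shifted by one), so Player 1 wins memorylessly there.
Finally, memoryless winning strategies of both players from the same state would yield a single
play won by both.
-/

open Function OrdinalApprox Cardinal

section ComplFixpoint

variable {α : Type*} [CompleteBooleanAlgebra α] {f g : α →o α}

theorem OrderHom.gfp_eq_compl_lfp (h : ∀ x, g xᶜ = (f x)ᶜ) : g.gfp = f.lfpᶜ := by
  refine le_antisymm ?_ (OrderHom.le_gfp _ ?_)
  · rw [le_compl_comm]
    refine OrderHom.lfp_le _ ?_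
    rw [← compl_compl (f _), ← h, compl_compl, OrderHom.map_gfp]
  · rw [h, OrderHom.map_lfp]

theorem OrderHom.lfp_eq_compl_gfp (h : ∀ x, g xᶜ = (f x)ᶜ) : g.lfp = f.gfpᶜ := by
  rw [OrderHom.gfp_eq_compl_lfp (f := g) fun x => by rw [← compl_compl x, h, compl_compl,
    compl_compl], compl_compl]

end ComplFixpoint

namespace ParityGame

section Signature

def oddTrunc (p : ℕ) (t : ℕ → Ordinal) : Lex (Fin (p + 1) → Ordinal) :=
  toLex fun i => if Odd (i : ℕ) then t i else 0

variable {p : ℕ} {s t : ℕ → Ordinal}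

theorem oddTrunc_congr (h : ∀ q ≤ p, Odd q → s q = t q) : oddTrunc p s = oddTrunc p t :=
  congrArg toLex <| funext fun i => by
    split_ifs with hi
    exacts [h i (Nat.lt_succ_iff.1 i.2) hi, rfl]

theorem oddTrunc_eq_of_not_odd (hp : ¬Odd p) (h : ∀ q < p, s q = t q) :
    oddTrunc p s = oddTrunc p t :=
  oddTrunc_congr fun q hq hodd => h q (hq.lt_of_ne fun hqp => hp (hqp ▸ hodd))

theorem oddTrunc_lt_of_odd (hp : Odd p) (h : ∀ q < p, s q = t q) (hlt : s p < t p) :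
    oddTrunc p s < oddTrunc p t :=
  ⟨Fin.last p, fun j hj => by simp [oddTrunc, h j hj], by simpa [oddTrunc, hp] using hlt⟩

theorem oddTrunc_le_oddTrunc_of_le {D : ℕ} (hpD : p ≤ D) (h : oddTrunc D s ≤ oddTrunc D t) :
    oddTrunc p s ≤ oddTrunc p t := by
  have agree_below : ∀ i : Fin (D + 1), (∀ j < i, oddTrunc D s j = oddTrunc D t j) →
      ∀ q < (i : ℕ), Odd q → s q = t q := fun i hi q hq hodd => by
    simpa [oddTrunc, hodd] using hi ⟨q, by omega⟩ hq
  rcases h.lt_or_eq with ⟨i, hi, hlt⟩ | heq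
  · by_cases hip : (i : ℕ) ≤ p
    · refine le_of_lt ⟨⟨i, by omega⟩, fun j hj => ?_, by simpa [oddTrunc] using hlt⟩
      simpa [oddTrunc] using hi ⟨j, by omega⟩ hj
    · exact (oddTrunc_congr fun q hq => agree_below i hi q (by omega)).le
  · refine (oddTrunc_congr fun q hq hodd => ?_).le
    simpa [oddTrunc, hodd] using congrFun (congrArg ofLex heq) ⟨q, by omega⟩

def IsProgress (p : ℕ) (s t : ℕ → Ordinal) : Prop :=
  oddTrunc p s ≤ oddTrunc p t ∧ (Odd p → oddTrunc p s < oddTrunc p t)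

end Signature

section InfinitelyOften

variable {c : ℕ → ℕ}

theorem nonempty_infinite_fibers {d : ℕ} (hc : ∀ n, c n < d) :
    {k | {n | c n = k}.Infinite}.Nonempty := by
  by_contra h
  have hfin : (⋃ k ∈ Set.Iio d, {n | c n = k}).Finite :=
    (Set.finite_Iio d).biUnion fun k _ => Set.not_infinite.1 fun hk => h ⟨k, hk⟩
  exact Set.infinite_univ (hfin.subset fun n _ => Set.mem_biUnion (hc n) rfl)

theorem exists_forall_ge_sInf_infinite_fibers :
    ∃ N, ∀ n ≥ N, sInf {k | {n | c n = k}.Infinite} ≤ c n := by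
  set P := sInf {k | {n | c n = k}.Infinite}
  have hfin : (⋃ k ∈ Set.Iio P, {n | c n = k}).Finite :=
    (Set.finite_Iio P).biUnion fun k hk => Set.not_infinite.1 (Nat.notMem_of_lt_sInf hk)
  obtain ⟨N, hN⟩ := hfin.bddAbove
  refine ⟨N + 1, fun n hn => not_lt.1 fun hlt => ?_⟩
  have := hN (Set.mem_biUnion hlt rfl)
  omega

theorem sInf_infinite_fibers_succ {d : ℕ} (hc : ∀ n, c n < d) :
    sInf {k | {n | c n + 1 = k}.Infinite} = sInf {k | {n | c n = k}.Infinite} + 1 := by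
  have himage : {k | {n | c n + 1 = k}.Infinite} = Nat.succ '' {k | {n | c n = k}.Infinite} := by
    ext k
    cases k with
    | zero => simp
    | succ k => simp
  rw [himage]
  obtain ⟨k, hk, hk'⟩ := Nat.sInf_mem ((nonempty_infinite_fibers hc).image Nat.succ)
  refine le_antisymm (Nat.sInf_le ⟨_, Nat.sInf_mem (nonempty_infinite_fibers hc), rfl⟩) ?_
  rw [← hk']
  exact Nat.succ_le_succ (Nat.sInf_le hk)

theorem even_sInf_infinite_fibers_of_isProgress {d : ℕ} (hc : ∀ n, c n < d)
    {m : ℕ → ℕ → Ordinal} (hm : ∀ n, IsProgress (c n) (m (n + 1)) (m n)) :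
    Even (sInf {k | {n | c n = k}.Infinite}) := by
  set P := sInf {k | {n | c n = k}.Infinite}
  have hP : {n | c n = P}.Infinite := Nat.sInf_mem (nonempty_infinite_fibers hc)
  obtain ⟨N, hN⟩ := exists_forall_ge_sInf_infinite_fibers (c := c)
  by_contra hodd
  rw [Nat.not_even_iff_odd] at hodd
  let s : ℕ → Lex (Fin (P + 1) → Ordinal) := fun n => oddTrunc P (m (N + n))
  have hanti : Antitone s := antitone_nat_of_succ_le fun n =>
    oddTrunc_le_oddTrunc_of_le (hN _ (Nat.le_add_right N n)) (hm (N + n)).1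
  obtain ⟨n, hnP, hn⟩ := hP.exists_gt (N + argmin s)
  have hdrop : s (n - N + 1) < s (n - N) := by
    have hlt := (hm n).2 (hnP ▸ hodd)
    rw [hnP] at hlt
    simpa only [s, ← Nat.add_assoc, Nat.add_sub_cancel' (by omega : N ≤ n)] using hlt
  exact (hdrop.trans_le (hanti (by omega : argmin s ≤ n - N))).not_ge (argmin_le s _)

end InfinitelyOften

theorem exists_eq_some_and_succ_eq_none {α : Type*} {p : ℕ → Option α} (h0 : (p 0).isSome)
    (h : ¬∀ n, (p n).isSome) : ∃ n v, p n = some v ∧ p (n + 1) = none := by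
  by_contra hlast
  simp only [not_exists, not_and] at hlast
  refine h fun n => ?_
  induction n with
  | zero => exact h0
  | succ n ih =>
    obtain ⟨v, hv⟩ := Option.isSome_iff_exists.1 ih
    exact Option.isSome_iff_ne_none.2 (hlast n v hv)

section NestedFixpoint

universe u

variable {V : Type u}

def updateHom (S : (ℕ → Set V) →o Set V) (ρ : ℕ → Set V) (p : ℕ) : Set V →o Set V :=
  ⟨fun X => S (update ρ p X), fun _ _ h => S.mono (update_le_update_iff'.2 h)⟩

theorem updateHom_mono (S : (ℕ → Set V) →o Set V) {ρ ρ' : ℕ → Set V} (h : ρ ≤ ρ') (p : ℕ) :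
    updateHom S ρ p ≤ updateHom S ρ' p :=
  fun _ => S.mono (update_le_update_iff.2 ⟨le_rfl, fun j _ => h j⟩)

variable (F : (ℕ → Set V) →o Set V)

/-- `nestedFix F [p₀, …, pₖ] ρ` is `σ₀ X₀. ⋯ σₖ Xₖ. F ρ[p₀ ↦ X₀, …, pₖ ↦ Xₖ]`, with `σᵢ = μ`
for odd `pᵢ` and `σᵢ = ν` for even `pᵢ`. -/
def nestedFix : List ℕ → (ℕ → Set V) →o Set V
  | [] => F
  | p :: l =>
    { toFun := fun ρ =>
        if Odd p then (updateHom (nestedFix l) ρ p).lfp else (updateHom (nestedFix l) ρ p).gfp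
      monotone' := fun ρ ρ' h => by
        have hmono := updateHom_mono (nestedFix l) h p
        split_ifs
        exacts [OrderHom.lfp.monotone hmono, OrderHom.gfp.monotone hmono] }

theorem nestedFix_cons_apply (p : ℕ) (l : List ℕ) (ρ : ℕ → Set V) :
    nestedFix F (p :: l) ρ =
      if Odd p then (updateHom (nestedFix F l) ρ p).lfp else (updateHom (nestedFix F l) ρ p).gfp :=
  rfl

theorem nestedFix_cons (p : ℕ) (l : List ℕ) (ρ : ℕ → Set V) :
    nestedFix F (p :: l) ρ = nestedFix F l (update ρ p (nestedFix F (p :: l) ρ)) := by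
  change _ = updateHom (nestedFix F l) ρ p (nestedFix F (p :: l) ρ)
  rw [nestedFix_cons_apply]
  split_ifs
  exacts [(OrderHom.map_lfp _).symm, (OrderHom.map_gfp _).symm]

/-- The stage of a least fixpoint is indexed by the signature; greatest fixpoints need none. -/
def stage (l : List ℕ) (p : ℕ) (t : ℕ → Ordinal.{u}) (ρ : ℕ → Set V) : Set V :=
  if Odd p then lfpApprox (updateHom (nestedFix F l) ρ p) ⊥ (t p)
  else (updateHom (nestedFix F l) ρ p).gfp

def approxEnv : List ℕ → (ℕ → Ordinal.{u}) → (ℕ → Set V) → ℕ → Set V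
  | [], _, ρ => ρ
  | p :: l, t, ρ => approxEnv l t (update ρ p (stage F l p t ρ))

def approx (l : List ℕ) (t : ℕ → Ordinal.{u}) (ρ : ℕ → Set V) : Set V :=
  F (approxEnv F l t ρ)

theorem approxEnv_of_not_mem {l : List ℕ} {p : ℕ} (hp : p ∉ l) (t : ℕ → Ordinal.{u})
    (ρ : ℕ → Set V) : approxEnv F l t ρ p = ρ p := by
  induction l generalizing ρ with
  | nil => rfl
  | cons q l ih =>
    rw [List.mem_cons, not_or] at hp
    rw [approxEnv, ih hp.2, update_of_ne hp.1]

theorem stage_le_nestedFix (l : List ℕ) (p : ℕ) (t : ℕ → Ordinal.{u}) (ρ : ℕ → Set V) :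
    stage F l p t ρ ≤ nestedFix F (p :: l) ρ := by
  rw [stage, nestedFix_cons_apply]
  split_ifs
  exacts [lfpApprox_le_of_mem_fixedPoints _ (OrderHom.isFixedPt_lfp _) bot_le _, le_rfl]

theorem stage_eq_nestedFix {l : List ℕ} {p : ℕ} {t : ℕ → Ordinal.{u}}
    (ht : ord (Order.succ #(Set V)) ≤ t p) (ρ : ℕ → Set V) :
    stage F l p t ρ = nestedFix F (p :: l) ρ := by
  rw [stage, nestedFix_cons_apply]
  split_ifs
  · rw [← lfpApprox_ord_eq_lfp]
    exact lfpApprox_eq_of_mem_fixedPoints _ ht (lfpApprox_ord_mem_fixedPoint _ bot_le)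
  · rfl

theorem approx_le_nestedFix (l : List ℕ) (t : ℕ → Ordinal.{u}) (ρ : ℕ → Set V) :
    approx F l t ρ ≤ nestedFix F l ρ := by
  induction l generalizing ρ with
  | nil => exact le_rfl
  | cons p l ih =>
    rw [nestedFix_cons]
    exact (ih _).trans ((nestedFix F l).mono
      (update_le_update_iff'.2 (stage_le_nestedFix F l p t ρ)))

theorem approx_eq_nestedFix {l : List ℕ} {t : ℕ → Ordinal.{u}}
    (ht : ∀ p ∈ l, ord (Order.succ #(Set V)) ≤ t p) (ρ : ℕ → Set V) :
    approx F l t ρ = nestedFix F l ρ := by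
  induction l generalizing ρ with
  | nil => rfl
  | cons p l ih =>
    rw [nestedFix_cons, approx, approxEnv, ← approx,
      ← stage_eq_nestedFix F (ht p List.mem_cons_self),
      ih fun q hq => ht q (List.mem_cons_of_mem p hq)]

theorem exists_lt_of_mem_lfpApprox_bot {f : Set V →o Set V} {o : Ordinal.{u}} {w : V}
    (hw : w ∈ lfpApprox f ⊥ o) : ∃ o' < o, w ∈ f (lfpApprox f ⊥ o') := by
  rw [lfpApprox] at hw
  simpa using hw

theorem exists_mem_of_mem_stage {l : List ℕ} {p : ℕ} {t : ℕ → Ordinal.{u}} {ρ : ℕ → Set V}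
    {w : V} (hw : w ∈ stage F l p t ρ) : ∃ o, (Odd p → o < t p) ∧
      ∀ t' : ℕ → Ordinal.{u}, t' p = o → w ∈ nestedFix F l (update ρ p (stage F l p t' ρ)) := by
  by_cases hp : Odd p
  · rw [stage, if_pos hp] at hw
    obtain ⟨o, ho, hwo⟩ := exists_lt_of_mem_lfpApprox_bot hw
    exact ⟨o, fun _ => ho, fun t' ht' => by rwa [stage, if_pos hp, ht']⟩
  · rw [stage, if_neg hp, ← OrderHom.map_gfp] at hw
    exact ⟨0, hp.elim, fun t' _ => by rwa [stage, if_neg hp]⟩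

theorem exists_mem_approx_of_mem_approxEnv {l : List ℕ} (hl : l.Pairwise (· < ·)) {p : ℕ}
    (hp : p ∈ l) {t : ℕ → Ordinal.{u}} {ρ : ℕ → Set V} {w : V} (hw : w ∈ approxEnv F l t ρ p) :
    ∃ t', (∀ q < p, t' q = t q) ∧ (Odd p → t' p < t p) ∧ w ∈ approx F l t' ρ := by
  induction l generalizing ρ with
  | nil => exact absurd hp List.not_mem_nil
  | cons q l ih =>
    rw [List.pairwise_cons] at hl
    rcases List.mem_cons.1 hp with rfl | hp
    · rw [approxEnv, approxEnv_of_not_mem F (fun h => lt_irrefl p (hl.1 p h)), update_self] at hw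
      obtain ⟨o, ho, hwo⟩ := exists_mem_of_mem_stage F hw
      -- above `p` the stages are taken at the closure ordinal, where they are the fixpoints
      let t' : ℕ → Ordinal.{u} := fun q =>
        if q < p then t q else if q = p then o else ord (Order.succ #(Set V))
      refine ⟨t', fun q hq => if_pos hq, fun hodd => by simpa [t'] using ho hodd, ?_⟩
      rw [approx, approxEnv, ← approx, approx_eq_nestedFix F fun r hr => ?_]
      · exact hwo t' (by simp [t'])
      · simp [t', (hl.1 r hr).not_gt, (hl.1 r hr).ne']
    · obtain ⟨t', hbelow, hodd, hmem⟩ := ih hl.2 hp hw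
      refine ⟨t', hbelow, hodd, ?_⟩
      have hstage : stage F l q t' ρ = stage F l q t ρ := by
        simp only [stage, hbelow q (hl.1 p hp)]
      rwa [approx, approxEnv, hstage]

theorem nestedFix_map_succ {F F' : (ℕ → Set V) →o Set V}
    (hF : ∀ ρ ρ' : ℕ → Set V, (∀ q, ρ' (q + 1) = (ρ q)ᶜ) → F' ρ' = (F ρ)ᶜ) (l : List ℕ)
    {ρ ρ' : ℕ → Set V} (hρ : ∀ q, ρ' (q + 1) = (ρ q)ᶜ) :
    nestedFix F' (l.map (· + 1)) ρ' = (nestedFix F l ρ)ᶜ := by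
  induction l generalizing ρ ρ' with
  | nil => exact hF ρ ρ' hρ
  | cons p l ih =>
    have hupd : ∀ X, updateHom (nestedFix F' (l.map (· + 1))) ρ' (p + 1) Xᶜ =
        (updateHom (nestedFix F l) ρ p X)ᶜ := fun X => ih fun q => by
      rcases eq_or_ne q p with rfl | hq
      · simp
      · rw [update_of_ne (by omega), update_of_ne hq, hρ]
    rw [List.map_cons, nestedFix_cons_apply, nestedFix_cons_apply]
    by_cases hp : Odd p
    · rw [if_neg fun h => Nat.odd_add_one.1 h hp, if_pos hp]
      exact OrderHom.gfp_eq_compl_lfp hupd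
    · rw [if_pos (Nat.odd_add_one.2 hp), if_neg hp]
      exact OrderHom.lfp_eq_compl_gfp hupd

end NestedFixpoint

section Game

variable (G : ParityGame)

def cpre (S : Set G.V) : Set G.V :=
  {v | (G.owner v = false → ∃ w, G.R v w ∧ w ∈ S) ∧ (G.owner v = true → ∀ w, G.R v w → w ∈ S)}

theorem cpre_mono : Monotone G.cpre := fun _ _ h _ hv =>
  ⟨fun ho => (hv.1 ho).imp fun _ hw => ⟨hw.1, h hw.2⟩, fun ho w hw => h (hv.2 ho w hw)⟩

def cpreByPriority : (ℕ → Set G.V) →o Set G.V :=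
  ⟨fun ρ => {v | v ∈ G.cpre (ρ (G.ω v))}, fun _ _ h _ hv => G.cpre_mono (h _) hv⟩

/-- The region where Player 0 wins, as the nested fixpoint
`νX₀ μX₁ ⋯ σX_{d-1}. {v | v ∈ cpre X_{ω v}}`, for priorities below `d`. -/
def winningRegion (d : ℕ) : Set G.V :=
  nestedFix G.cpreByPriority (List.range d) fun _ => ∅

/-- Swapping the players and shifting all priorities by one swaps the winning conditions. -/
abbrev dual : ParityGame :=
  ⟨G.V, fun v => !G.owner v, G.R, fun v => G.ω v + 1⟩

theorem dual_cpreByPriority {ρ ρ' : ℕ → Set G.V} (h : ∀ q, ρ' (q + 1) = (ρ q)ᶜ) :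
    G.dual.cpreByPriority ρ' = (G.cpreByPriority ρ)ᶜ := by
  refine Set.ext fun (v : G.V) => ?_
  cases ho : G.owner v <;> simp [cpreByPriority, cpre, dual, ho, h]

theorem compl_winningRegion (d : ℕ) :
    (G.winningRegion d)ᶜ =
      nestedFix G.dual.cpreByPriority ((List.range d).map (· + 1)) fun _ => Set.univ :=
  (nestedFix_map_succ (fun _ _ => G.dual_cpreByPriority) _ fun _ => Set.compl_empty.symm).symm

def IsProgressMeasure (W : Set G.V) (m : G.V → ℕ → Ordinal.{0}) : Prop :=
  ∀ v ∈ W, (G.owner v = false → ∃ w, G.R v w ∧ w ∈ W ∧ IsProgress (G.ω v) (m w) (m v)) ∧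
    (G.owner v = true → ∀ w, G.R v w → w ∈ W ∧ IsProgress (G.ω v) (m w) (m v))

/-- The signature of `v ∈ W` is the lexicographically least tuple of stages `t` placing `v` in
the approximant of `W` determined by `t`. -/
theorem exists_isProgressMeasure {C : List ℕ} (hC : C.Pairwise (· < ·)) (hcov : ∀ v, G.ω v ∈ C)
    {D : ℕ} (hD : ∀ v, G.ω v ≤ D) (ρ : ℕ → Set G.V) :
    ∃ m, G.IsProgressMeasure (nestedFix G.cpreByPriority C ρ) m := by
  set W := nestedFix G.cpreByPriority C ρ
  have hmin : ∀ v ∈ W, ∃ t, v ∈ approx G.cpreByPriority C t ρ ∧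
      ∀ t', v ∈ approx G.cpreByPriority C t' ρ → oddTrunc D t ≤ oddTrunc D t' := by
    intro v hv
    have hne : {t | v ∈ approx G.cpreByPriority C t ρ}.Nonempty :=
      ⟨fun _ => ord (Order.succ #(Set G.V)), (approx_eq_nestedFix _ (fun _ _ => le_rfl) ρ).ge hv⟩
    exact ⟨_, argminOn_mem (oddTrunc D) _ hne, fun t' ht' => argminOn_le (oddTrunc D) _ ht'⟩
  choose! sig hsig_mem hsig_min using hmin
  refine ⟨sig, fun v hv => ?_⟩
  have hsucc : ∀ w ∈ approxEnv G.cpreByPriority C (sig v) ρ (G.ω v),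
      w ∈ W ∧ IsProgress (G.ω v) (sig w) (sig v) := by
    intro w hw
    obtain ⟨t, hbelow, hodd, hwt⟩ := exists_mem_approx_of_mem_approxEnv _ hC (hcov v) hw
    have hwW : w ∈ W := approx_le_nestedFix _ C t ρ hwt
    have hle := oddTrunc_le_oddTrunc_of_le (hD v) (hsig_min w hwW t hwt)
    refine ⟨hwW, ?_⟩
    by_cases hp : Odd (G.ω v)
    · have hlt := hle.trans_lt (oddTrunc_lt_of_odd hp hbelow (hodd hp))
      exact ⟨hlt.le, fun _ => hlt⟩
    · exact ⟨hle.trans (oddTrunc_eq_of_not_odd hp hbelow).le, hp.elim⟩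
  have hcpre : v ∈ G.cpre (approxEnv G.cpreByPriority C (sig v) ρ (G.ω v)) := hsig_mem v hv
  refine ⟨fun ho => ?_, fun ho w hw => hsucc w (hcpre.2 ho w hw)⟩
  obtain ⟨w, hw, hwS⟩ := hcpre.1 ho
  exact ⟨w, hw, hsucc w hwS⟩

theorem exists_memoryless_strategy (b : Bool) (Good : G.V → G.V → Prop)
    (h : ∀ v, G.owner v = b → (∃ w, G.R v w) → ∃ w, G.R v w ∧ Good v w) :
    ∃ σ : G.Strategy b, σ.Memoryless ∧
      ∀ hist v, G.owner v = b → (∃ w, G.R v w) → Good v (σ.next hist v) := by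
  classical
  let next (v : G.V) : G.V :=
    if hv : G.owner v = b ∧ ∃ w, G.R v w then (h v hv.1 hv.2).choose else v
  have hnext : ∀ v, G.owner v = b → (∃ w, G.R v w) → G.R v (next v) ∧ Good v (next v) :=
    fun v ho he => by simpa only [next, dif_pos (And.intro ho he)] using (h v ho he).choose_spec
  exact ⟨⟨fun _ => next, fun _ v ho he => (hnext v ho he).1⟩, fun _ _ _ => rfl,
    fun _ v ho he => (hnext v ho he).2⟩

variable {G}

theorem IsProgressMeasure.exists_memoryless_winning {W : Set G.V}
    {m : G.V → ℕ → Ordinal} (hm : G.IsProgressMeasure W m) {d : ℕ} (hd : ∀ v, G.ω v < d) :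
    ∃ σ : G.Strategy false, σ.Memoryless ∧ ∀ y ∈ W, G.WinningFrom false σ y := by
  obtain ⟨σ, hσ, hgood⟩ := G.exists_memoryless_strategy false
    (fun v w => v ∈ W → w ∈ W ∧ IsProgress (G.ω v) (m w) (m v)) fun v ho ⟨w, hw⟩ => by
      by_cases hv : v ∈ W
      · obtain ⟨w', hw', hw'W, hprog⟩ := (hm v hv).1 ho
        exact ⟨w', hw', fun _ => ⟨hw'W, hprog⟩⟩
      · exact ⟨w, hw, fun h => absurd h hv⟩
  refine ⟨σ, hσ, fun y hy p ⟨hstart, hend, hnone, hedge, hfollow⟩ => ?_⟩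
  have hstep : ∀ n v w, p n = some v → p (n + 1) = some w → v ∈ W →
      w ∈ W ∧ IsProgress (G.ω v) (m w) (m v) := by
    intro n v w hv hw hvW
    cases ho : G.owner v
    · rw [hfollow n v w hv hw ho]
      exact hgood _ v ho ⟨w, hedge n v w hv hw⟩ hvW
    · exact (hm v hvW).2 ho w (hedge n v w hv hw)
  have hW : ∀ n v, p n = some v → v ∈ W := by
    intro n
    induction n with
    | zero => exact fun v hv => Option.some_injective _ (hstart.symm.trans hv) ▸ hy
    | succ n ih =>
      intro w hw
      cases hpn : p n with
      | none => simp [hnone n hpn] at hw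
      | some v => exact (hstep n v w hpn hw (ih v hpn)).1
  refine ⟨fun n v hv hn ho => ?_, fun hall => ?_⟩
  · obtain ⟨w, hw, -⟩ := (hm v (hW n v hv)).1 ho
    exact (hend n v hv).1 hn ⟨w, hw⟩
  · choose vs hvs using fun n => Option.isSome_iff_exists.1 (hall n)
    simp only [hvs, Option.some.injEq, exists_eq_left', iff_true]
    exact even_sInf_infinite_fibers_of_isProgress (m := fun n => m (vs n)) (fun n => hd (vs n))
      fun n => (hstep n _ _ (hvs n) (hvs (n + 1)) (hW n _ (hvs n))).2

def Strategy.ofDual (σ : G.dual.Strategy false) : G.Strategy true :=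
  ⟨σ.next, fun h v ho he => σ.valid h v (by simp [ho]) he⟩

theorem IsPlayFor.dual {σ : G.dual.Strategy false} {y : G.V} {p : ℕ → Option G.V}
    (h : G.IsPlayFor true σ.ofDual y p) : G.dual.IsPlayFor false σ y p :=
  let ⟨h0, hend, hnone, hedge, hfollow⟩ := h
  ⟨h0, hend, hnone, hedge, fun n v w hv hw ho => hfollow n v w hv hw (by simpa using ho)⟩

theorem WinsPlay.ofDual {d : ℕ} (hd : ∀ v, G.ω v < d) {p : ℕ → Option G.V}
    (h : G.dual.WinsPlay false p) : G.WinsPlay true p := by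
  obtain ⟨hend, hinf⟩ := h
  refine ⟨fun n v hv hn ho => hend n v hv hn (by simp [ho]), fun hall => ?_⟩
  have hpar := hinf hall
  choose vs hvs using fun n => Option.isSome_iff_exists.1 (hall n)
  simp only [hvs, Option.some.injEq, exists_eq_left'] at hpar ⊢
  rw [sInf_infinite_fibers_succ fun n => hd (vs n)] at hpar
  simpa [Nat.even_add_one] using hpar

theorem WinningFrom.ofDual {d : ℕ} (hd : ∀ v, G.ω v < d) {σ : G.dual.Strategy false} {y : G.V}
    (h : G.dual.WinningFrom false σ y) : G.WinningFrom true σ.ofDual y :=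
  fun p hp => (h p hp.dual).ofDual hd

variable (G)

open Classical in
noncomputable def jointPlay (σ : (b : Bool) → G.Strategy b) (y : G.V) : ℕ → Option G.V
  | 0 => some y
  | n + 1 => (jointPlay σ y n).bind fun v =>
      if ∃ w, G.R v w then some ((σ (G.owner v)).next [] v) else none

theorem isPlayFor_jointPlay (σ : (b : Bool) → G.Strategy b) (y : G.V) (b : Bool)
    (hσ : (σ b).Memoryless) : G.IsPlayFor b (σ b) y (G.jointPlay σ y) := by
  classical
  have hsucc : ∀ n v, G.jointPlay σ y n = some v → G.jointPlay σ y (n + 1) =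
      if ∃ w, G.R v w then some ((σ (G.owner v)).next [] v) else none := fun n v hv => by
    simp [jointPlay, hv]
  refine ⟨rfl, fun n v hv => ?_, fun n hn => by simp [jointPlay, hn], fun n v w hv hw => ?_,
    fun n v w hv hw ho => ?_⟩
  · rw [hsucc n v hv]
    split_ifs with he <;> simp [he]
  · rw [hsucc n v hv] at hw
    split_ifs at hw with he
    rw [← Option.some_inj.1 hw]
    exact (σ _).valid [] v rfl he
  · rw [hsucc n v hv] at hw
    split_ifs at hw with he
    subst ho
    rw [← Option.some_inj.1 hw, hσ]

theorem not_winsPlay_false_and_true {p : ℕ → Option G.V} (h0 : (p 0).isSome) :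
    ¬(G.WinsPlay false p ∧ G.WinsPlay true p) := by
  rintro ⟨⟨hend₀, hinf₀⟩, hend₁, hinf₁⟩
  by_cases hall : ∀ n, (p n).isSome
  · exact Bool.noConfusion ((hinf₁ hall).1 ((hinf₀ hall).2 rfl))
  · obtain ⟨n, v, hv, hn⟩ := exists_eq_some_and_succ_eq_none h0 hall
    cases ho : G.owner v
    exacts [hend₀ n v hv hn ho, hend₁ n v hv hn ho]

theorem not_memoryless_winningFrom_both {y : G.V} {σ₀ : G.Strategy false} (hσ₀ : σ₀.Memoryless)
    (hw₀ : G.WinningFrom false σ₀ y) {σ₁ : G.Strategy true} (hσ₁ : σ₁.Memoryless)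
    (hw₁ : G.WinningFrom true σ₁ y) : False :=
  let σ : (b : Bool) → G.Strategy b := fun | false => σ₀ | true => σ₁
  G.not_winsPlay_false_and_true rfl ⟨hw₀ _ (G.isPlayFor_jointPlay σ y false hσ₀),
    hw₁ _ (G.isPlayFor_jointPlay σ y true hσ₁)⟩

theorem exists_memoryless_winning_on_winningRegion {d : ℕ} (hd : ∀ v, G.ω v < d) :
    ∃ σ : G.Strategy false, σ.Memoryless ∧ ∀ y ∈ G.winningRegion d, G.WinningFrom false σ y := by
  obtain ⟨m, hm⟩ := G.exists_isProgressMeasure List.pairwise_lt_range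
    (fun v => List.mem_range.2 (hd v)) (fun v => (hd v).le) _
  exact hm.exists_memoryless_winning hd

theorem exists_memoryless_winning_on_compl_winningRegion {d : ℕ} (hd : ∀ v, G.ω v < d) :
    ∃ σ : G.Strategy true, σ.Memoryless ∧ ∀ y ∈ (G.winningRegion d)ᶜ, G.WinningFrom true σ y := by
  obtain ⟨m, hm⟩ := G.dual.exists_isProgressMeasure
    (List.pairwise_map.2 (List.pairwise_lt_range.imp Nat.succ_lt_succ))
    (fun v => List.mem_map_of_mem (List.mem_range.2 (hd v))) (D := d) hd _
  obtain ⟨σ, hσ, hwin⟩ := hm.exists_memoryless_winning (d := d + 1) fun v => Nat.succ_lt_succ (hd v)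
  exact ⟨σ.ofDual, hσ, fun y hy => (hwin y (G.compl_winningRegion d ▸ hy)).ofDual hd⟩

end Game

end ParityGame

/-- positional determinacy of two-player turn-based parity games
(with finitely many priorities): from every state, exactly one of the two
players has a memoryless winning strategy. -/
theorem stmt13 (G : ParityGame) (hfin : (Set.range G.ω).Finite) (y : G.V) :
    Xor'
      (∃ σ : G.Strategy false, σ.Memoryless ∧ G.WinningFrom false σ y)
      (∃ σ : G.Strategy true, σ.Memoryless ∧ G.WinningFrom true σ y) := by
  obtain ⟨d, hd⟩ : ∃ d, ∀ v, G.ω v < d := by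
    obtain ⟨M, hM⟩ := hfin.bddAbove
    exact ⟨M + 1, fun v => Nat.lt_succ_of_le (hM ⟨v, rfl⟩)⟩
  obtain ⟨σ₀, hσ₀, hwin₀⟩ := G.exists_memoryless_winning_on_winningRegion hd
  obtain ⟨σ₁, hσ₁, hwin₁⟩ := G.exists_memoryless_winning_on_compl_winningRegion hd
  have hsome : (∃ σ : G.Strategy false, σ.Memoryless ∧ G.WinningFrom false σ y) ∨
      ∃ σ : G.Strategy true, σ.Memoryless ∧ G.WinningFrom true σ y :=
    (em (y ∈ G.winningRegion d)).imp (fun hy => ⟨σ₀, hσ₀, hwin₀ y hy⟩)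
      fun hy => ⟨σ₁, hσ₁, hwin₁ y hy⟩
  refine (xor_iff_or_and_not_and _ _).2 ⟨hsome, ?_⟩
  rintro ⟨⟨τ₀, hτ₀, hw₀⟩, τ₁, hτ₁, hw₁⟩
  exact G.not_memoryless_winningFrom_both hτ₀ hw₀ hτ₁ hw₁
end

section
/- For any unitary markings ν₁, ν₂ of S' by S satisfying EU-pairs ⟨E₁;U₁⟩ and ⟨E₂;U₂⟩ respectively (over S), the pointwise-union marking (ν₁ ⋓ ν₂)(s') = {ν₁(s')} ∪ {ν₂(s')} of S' by 2^S set-satisfies the conjunction: there exist disjoint sets O, H₁, H₂ ⊆ S' with ν₁(O∪H₁) = E₁, ν₂(O∪H₂) = E₂, supp(ν₁(S'∖(O∪H₁))) ⊆ U₁, supp(ν₂(S'∖(O∪H₂))) ⊆ U₂, and every element of (ν₁⋓ν₂)(S'∖(O∪H₁∪H₂)) lies in {u₁ ∪ u₂ | u₁ ∈ U₁, u₂ ∈ U₂}. -/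
/-- if unitary markings `ν₁, ν₂ : S' → S` satisfy the EU-pairs
`⟨E₁;U₁⟩` and `⟨E₂;U₂⟩` respectively, then the pointwise union marking
`s' ↦ {ν₁ s', ν₂ s'}` set-satisfies the conjunction: there exist pairwise disjoint
`O, H₁, H₂ ⊆ S'` with `ν₁(O∪H₁) = E₁`, `ν₂(O∪H₂) = E₂`,
`supp (ν₁ (S'∖(O∪H₁))) ⊆ U₁`, `supp (ν₂ (S'∖(O∪H₂))) ⊆ U₂`, and every element of
`(ν₁⋓ν₂)(S'∖(O∪H₁∪H₂))` of the form `{u₁} ∪ {u₂}` with `u₁ ∈ U₁`, `u₂ ∈ U₂`. -/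
theorem stmt14 (S S' : Type) [Fintype S'] [DecidableEq S']
    (ν₁ ν₂ : S' → S) (E₁ E₂ : Multiset S) (U₁ U₂ : Set S)
    (h₁ : ∃ T₁ : Finset S', T₁.val.map ν₁ = E₁ ∧ ∀ t ∉ T₁, ν₁ t ∈ U₁)
    (h₂ : ∃ T₂ : Finset S', T₂.val.map ν₂ = E₂ ∧ ∀ t ∉ T₂, ν₂ t ∈ U₂) :
    ∃ O H₁ H₂ : Finset S',
      Disjoint O H₁ ∧ Disjoint O H₂ ∧ Disjoint H₁ H₂ ∧
      (O ∪ H₁).val.map ν₁ = E₁ ∧ (O ∪ H₂).val.map ν₂ = E₂ ∧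
      (∀ t ∉ O ∪ H₁, ν₁ t ∈ U₁) ∧ (∀ t ∉ O ∪ H₂, ν₂ t ∈ U₂) ∧
      (∀ t ∉ O ∪ H₁ ∪ H₂, ∃ u₁ ∈ U₁, ∃ u₂ ∈ U₂,
        ({ν₁ t, ν₂ t} : Set S) = {u₁} ∪ {u₂}) := by
  obtain ⟨T₁, hT₁, hU₁⟩ := h₁
  obtain ⟨T₂, hT₂, hU₂⟩ := h₂
  refine ⟨T₁ ∩ T₂, T₁ \ T₂, T₂ \ T₁, ?_, ?_, ?_, ?_, ?_, ?_, ?_, ?_⟩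
  · exact Finset.disjoint_left.mpr (fun a ha hb => (Finset.mem_sdiff.mp hb).2 (Finset.mem_inter.mp ha).2)
  · exact Finset.disjoint_left.mpr (fun a ha hb => (Finset.mem_sdiff.mp hb).2 (Finset.mem_inter.mp ha).1)
  · exact Finset.disjoint_left.mpr (fun a ha hb => (Finset.mem_sdiff.mp hb).2 (Finset.mem_sdiff.mp ha).1)
  · rw [Finset.union_comm, Finset.sdiff_union_inter]; exact hT₁
  · rw [Finset.inter_comm, Finset.union_comm, Finset.sdiff_union_inter]; exact hT₂
  · rw [Finset.union_comm, Finset.sdiff_union_inter]; exact hU₁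
  · rw [Finset.inter_comm, Finset.union_comm, Finset.sdiff_union_inter]; exact hU₂
  · intro t ht
    have h1 : t ∉ T₁ := fun h => ht (by
      by_cases h2 : t ∈ T₂
      · exact Finset.mem_union_left _ (Finset.mem_union_left _ (Finset.mem_inter.mpr ⟨h, h2⟩))
      · exact Finset.mem_union_left _ (Finset.mem_union_right _ (Finset.mem_sdiff.mpr ⟨h, h2⟩)))
    have h2 : t ∉ T₂ := fun h => ht (Finset.mem_union_right _ (Finset.mem_sdiff.mpr ⟨h, h1⟩))
    exact ⟨ν₁ t, hU₁ t h1, ν₂ t, hU₂ t h2, Set.insert_eq _ _⟩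
end

section
/- Given a non-alternating parity word automaton B over alphabet Σ, one can construct a non-alternating parity tree automaton A over Σ such that A accepts exactly those Σ-labelled trees containing at least one branch whose word is accepted by B; moreover A uses one additional state beyond those of B, and its EU-pairs have existential parts of size 1 and universal parts of size 1. -/
/-- Non-alternating EU parity tree automaton: transitions are disjunctions
(sets) of EU-pairs. -/
structure NPTA (A : Type) where
  Q : Type
  init : Q
  δ : Q → A → Set (EUPair Q)
  ω : Q → ℕ

/-- Acceptance for non-alternating automata: a run assigns one state to each
node, locally some disjunct of the transition is satisfied, and along every
infinite branch the parity condition holds (finite branches are accepting). -/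
def NPTA.Accepts {A : Type} (M : NPTA A) {D : Type} (T : STree D A) : Prop :=
  ∃ ρ : List D → M.Q, ρ [] = M.init ∧
    (∀ n ∈ T.nodes, ∃ p ∈ M.δ (ρ n) (T.label n),
      SatEU {d | n ++ [d] ∈ T.nodes} (fun d => ({ρ (n ++ [d])} : Set M.Q)) p) ∧
    ∀ b : ℕ → D, (∀ k, (List.range k).map b ∈ T.nodes) →
      ParitySeq (fun k => M.ω (ρ ((List.range k).map b)))

/-- Non-alternating parity word automaton. -/
structure NPWA (A : Type) where
  Q : Type
  init : Q
  δ : Q → A → Set Q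
  ω : Q → ℕ

/-- `B` accepts the infinite word `w`: some execution satisfies the parity
condition. -/
def NPWA.AcceptsInf {A : Type} (B : NPWA A) (w : ℕ → A) : Prop :=
  ∃ s : ℕ → B.Q, s 0 = B.init ∧ (∀ k, s (k + 1) ∈ B.δ (s k) (w k)) ∧
    ParitySeq (fun k => B.ω (s k))

/-- `B` accepts the finite word `w`: some execution exists (no parity
constraint on finite words). -/
def NPWA.AcceptsFin {A : Type} (B : NPWA A) (w : List A) : Prop :=
  ∃ s : ℕ → B.Q, s 0 = B.init ∧
    ∀ k, (h : k < w.length) → s (k + 1) ∈ B.δ (s k) (w.get ⟨k, h⟩)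

/-! `B.toNPTA` guesses a branch and runs `B` along it, sending every other child to the sink
`q⊤`, whose children are again all in `q⊤`. So an accepting run is a chain of nodes from the
root carrying an execution of `B`: either the chain is infinite, and the parity condition along
it is that of `B`, or it stops at a leaf, where the extra disjunct `(0, ∅)` demands one more
step of `B`. A branch leaving the chain stays in `q⊤` from some point on, and there the only
priority is `0`. -/

lemma paritySeq_of_eventually_eq_zero {s : ℕ → ℕ} (N : ℕ) (h : ∀ k, N ≤ k → s k = 0) :
    ParitySeq s := by
  have hzero : {k | s k = 0}.Infinite := (Set.Ici_infinite N).mono h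
  have hinf : sInf {c | {k | s k = c}.Infinite} = 0 := Nat.le_zero.mp (Nat.sInf_le hzero)
  simp [ParitySeq, hinf]

section Prefixes

variable {D : Type}

def PrefixClosed (S : Set (List D)) : Prop :=
  ∀ m d, m ++ [d] ∈ S → m ∈ S

lemma PrefixClosed.mem_of_prefix {S : Set (List D)} (hS : PrefixClosed S) {m n : List D}
    (h : m <+: n) (hn : n ∈ S) : m ∈ S := by
  obtain ⟨l, rfl⟩ := h
  induction l using List.reverseRecOn with
  | nil => simpa using hn
  | append_singleton l d ih => exact ih (hS (m ++ l) d (by simpa using hn))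

lemma STree.prefixClosed_nodes {A : Type} (T : STree D A) : PrefixClosed T.nodes :=
  T.prefix_closed

lemma List.map_range_prefix_map_range (b : ℕ → D) {k j : ℕ} (h : k ≤ j) :
    (List.range k).map b <+: (List.range j).map b := by
  simpa [Nat.min_eq_left h] using (List.take_prefix k (List.range j)).map b

lemma List.append_singleton_eq_map_range_iff (b : ℕ → D) (m : List D) (d : D) :
    m ++ [d] = (List.range (m.length + 1)).map b ↔
      m = (List.range m.length).map b ∧ d = b m.length := by
  rw [List.range_succ, List.map_append, List.map_singleton]
  constructor
  · intro h
    obtain ⟨hm, hd⟩ := List.append_inj' h rfl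
    exact ⟨hm, List.singleton_inj.mp hd⟩
  · rintro ⟨hm, rfl⟩
    rw [← hm]

lemma List.append_singleton_prefix_unique {m n : List D} {d d' : D}
    (hd : m ++ [d] <+: n) (hd' : m ++ [d'] <+: n) : d' = d := by
  have h := (List.prefix_of_prefix_length_le hd' hd (by simp)).eq_of_length (by simp)
  simpa using h

lemma exists_branch_or_terminal (good terminal : List D → Prop) (hnil : good [])
    (hstep : ∀ n, good n → terminal n ∨ ∃ d, good (n ++ [d])) :
    (∃ b : ℕ → D, ∀ k, good ((List.range k).map b)) ∨
      ∃ n, terminal n ∧ ∀ m, m <+: n → good m := by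
  by_cases hterm : ∃ n, terminal n ∧ ∀ m, m <+: n → good m
  · exact Or.inr hterm
  left
  let G := {n : List D // ∀ m, m <+: n → good m}
  have hext : ∀ n : G, ∃ d, ∀ m, m <+: n.1 ++ [d] → good m := by
    intro ⟨n, hn⟩
    rcases hstep n (hn n (List.prefix_refl n)) with hn' | ⟨d, hd⟩
    · exact absurd ⟨n, hn', hn⟩ hterm
    · refine ⟨d, fun m hm => ?_⟩
      rcases List.prefix_concat_iff.mp hm with rfl | hm
      exacts [hd, hn m hm]
  choose next hnext using hext
  let path : ℕ → G := fun k => Nat.rec ⟨[], by simpa using hnil⟩ (fun _ n => ⟨_, hnext n⟩) k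
  have hpath : ∀ k, (path k).1 = (List.range k).map (fun i => next (path i)) := by
    intro k
    induction k with
    | zero => rfl
    | succ k ih => simp [path, List.range_succ, ← ih]
  exact ⟨fun i => next (path i), fun k => hpath k ▸ (path k).2 _ (List.prefix_refl _)⟩

end Prefixes

section SatEU

variable {D Q : Type} {C : Set D} {μ : D → Q}

lemma satEU_singleton_marking_iff {p : EUPair Q} :
    SatEU C (fun d => {μ d}) p ↔ ∃ m : Multiset D, m.Nodup ∧ (∀ d ∈ m, d ∈ C) ∧
      m.map μ = p.1 ∧ ∀ d ∈ C, d ∉ m → μ d ∈ p.2 := by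
  constructor
  · rintro ⟨f, hf, m, hnd, hmC, hmap, hrest⟩
    have hfμ : ∀ d ∈ C, f d = μ d := hf
    refine ⟨m, hnd, hmC, ?_, fun d hd hdm => hfμ d hd ▸ hrest d hd hdm⟩
    rw [← hmap]
    exact Multiset.map_congr rfl fun d hd => (hfμ d (hmC d hd)).symm
  · rintro ⟨m, hm⟩
    exact ⟨μ, fun _ _ => rfl, m, hm⟩

lemma satEU_zero_iff {U : Set Q} :
    SatEU C (fun d => {μ d}) (0, U) ↔ ∀ d ∈ C, μ d ∈ U := by
  rw [satEU_singleton_marking_iff]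
  constructor
  · rintro ⟨m, -, -, hmap, hrest⟩ d hd
    exact hrest d hd (by simp [Multiset.map_eq_zero.mp hmap])
  · intro h
    exact ⟨0, Multiset.nodup_zero, by simp, by simp, fun d hd _ => h d hd⟩

lemma satEU_singleton_iff {x : Q} {U : Set Q} :
    SatEU C (fun d => {μ d}) ({x}, U) ↔ ∃ d ∈ C, μ d = x ∧ ∀ d' ∈ C, d' ≠ d → μ d' ∈ U := by
  rw [satEU_singleton_marking_iff]
  constructor
  · rintro ⟨m, -, hmC, hmap, hrest⟩
    obtain ⟨d, rfl, hd⟩ := Multiset.map_eq_singleton.mp hmap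
    exact ⟨d, hmC d (Multiset.mem_singleton_self d), hd,
      fun d' hd' hne => hrest d' hd' (by simpa using hne)⟩
  · rintro ⟨d, hdC, rfl, hrest⟩
    exact ⟨{d}, Multiset.nodup_singleton d, by simpa using hdC, by simp,
      fun d' hd' hne => hrest d' hd' (by simpa using hne)⟩

end SatEU

section Construction

variable {A : Type}

/-- The state `none` plays the role of `q⊤`. A disjunct `(0, ∅)` can only be satisfied at a
leaf: it lets a run on a finite maximal branch stop after a last step of `B`. -/
@[reducible]
def NPWA.toNPTA (B : NPWA A) : NPTA A where
  Q := Option B.Q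
  init := some B.init
  δ
    | none, _ => {(0, {none})}
    | some q, a => ⋃ q' ∈ B.δ q a, {({some q'}, {none}), (0, ∅)}
  ω q := q.elim 0 B.ω

variable (B : NPWA A) {D : Type} {C : Set D} {μ : D → Option B.Q} {a : A}

lemma NPWA.mem_toNPTA_δ_some {q : B.Q} {p : EUPair (Option B.Q)} :
    p ∈ B.toNPTA.δ (some q) a ↔ ∃ q' ∈ B.δ q a, p = ({some q'}, {none}) ∨ p = (0, ∅) := by
  show p ∈ ⋃ q' ∈ B.δ q a, _ ↔ _
  simp

lemma NPWA.card_le_one_and_subsingleton_of_mem_toNPTA_δ (q : Option B.Q)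
    (p : EUPair (Option B.Q)) (hp : p ∈ B.toNPTA.δ q a) :
    Multiset.card p.1 ≤ 1 ∧ p.2.Subsingleton := by
  cases q with
  | none =>
    obtain rfl : p = (0, {none}) := hp
    exact ⟨by simp, Set.subsingleton_singleton⟩
  | some q =>
    obtain ⟨q', -, rfl | rfl⟩ := (B.mem_toNPTA_δ_some).mp hp
    exacts [⟨by simp, Set.subsingleton_singleton⟩, ⟨by simp, Set.subsingleton_empty⟩]

lemma NPWA.toNPTA_sat_none_iff :
    (∃ p ∈ B.toNPTA.δ none a, SatEU C (fun d => {μ d}) p) ↔ ∀ d ∈ C, μ d = none := by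
  simp [satEU_zero_iff]

lemma NPWA.toNPTA_sat_some_iff {q : B.Q} :
    (∃ p ∈ B.toNPTA.δ (some q) a, SatEU C (fun d => {μ d}) p) ↔
      (C = ∅ ∧ (B.δ q a).Nonempty) ∨
        ∃ d ∈ C, ∃ q' ∈ B.δ q a, μ d = some q' ∧ ∀ d' ∈ C, d' ≠ d → μ d' = none := by
  constructor
  · rintro ⟨p, hp, hsat⟩
    obtain ⟨q', hq', rfl | rfl⟩ := B.mem_toNPTA_δ_some.mp hp
    · obtain ⟨d, hdC, hd, hrest⟩ := satEU_singleton_iff.mp hsat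
      exact Or.inr ⟨d, hdC, q', hq', hd, hrest⟩
    · exact Or.inl ⟨Set.eq_empty_of_forall_notMem fun d hd => (satEU_zero_iff.mp hsat d hd),
        q', hq'⟩
  · rintro (⟨rfl, q', hq'⟩ | ⟨d, hdC, q', hq', hd, hrest⟩)
    · exact ⟨_, B.mem_toNPTA_δ_some.mpr ⟨q', hq', Or.inr rfl⟩,
        satEU_zero_iff.mpr fun d hd => hd.elim⟩
    · exact ⟨_, B.mem_toNPTA_δ_some.mpr ⟨q', hq', Or.inl rfl⟩,
        satEU_singleton_iff.mpr ⟨d, hdC, hd, hrest⟩⟩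

lemma NPWA.mem_δ_of_toNPTA_sat {q q' : B.Q} {d : D}
    (h : ∃ p ∈ B.toNPTA.δ (some q) a, SatEU C (fun d => {μ d}) p) (hd : d ∈ C)
    (hμ : μ d = some q') : q' ∈ B.δ q a := by
  rcases (B.toNPTA_sat_some_iff).mp h with ⟨rfl, -⟩ | ⟨d₀, -, q₀, hq₀, hd₀, hrest⟩
  · exact absurd hd (Set.notMem_empty d)
  · by_cases hdd₀ : d = d₀
    · subst hdd₀
      rwa [Option.some.inj (hμ.symm.trans hd₀)]
    · simp [hrest d hd hdd₀] at hμ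

end Construction

section Acceptance

variable {A D : Type} (B : NPWA A) (T : STree D A)

lemma NPWA.acceptsFin_prefix_labels_iff (n : List D) :
    B.AcceptsFin ((List.range (n.length + 1)).map fun k => T.label (n.take k)) ↔
      ∃ s : ℕ → B.Q, s 0 = B.init ∧
        ∀ k ≤ n.length, s (k + 1) ∈ B.δ (s k) (T.label (n.take k)) := by
  simp [NPWA.AcceptsFin]

/-- The witnessing run follows `s` on `P` and is `q⊤` everywhere else. -/
lemma NPWA.toNPTA_accepts_of_chain (P : Set (List D)) (s : ℕ → B.Q)
    (hPT : P ⊆ T.nodes) (hP : PrefixClosed P) (hnil : [] ∈ P) (hs0 : s 0 = B.init)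
    (hstep : ∀ m ∈ P, ((∀ d, m ++ [d] ∉ T.nodes) ∧ (B.δ (s m.length) (T.label m)).Nonempty) ∨
      ∃ d, m ++ [d] ∈ P ∧ (∀ d', m ++ [d'] ∈ P → d' = d) ∧
        s (m.length + 1) ∈ B.δ (s m.length) (T.label m))
    (hpar : ∀ b : ℕ → D, (∀ k, (List.range k).map b ∈ P) → ParitySeq fun k => B.ω (s k)) :
    B.toNPTA.Accepts T := by
  classical
  refine ⟨fun m => if m ∈ P then some (s m.length) else none, by simp [hnil, hs0], ?_, ?_⟩
  · intro m hm
    by_cases hmP : m ∈ P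
    · beta_reduce
      rw [if_pos hmP, B.toNPTA_sat_some_iff]
      rcases hstep m hmP with ⟨hleaf, hne⟩ | ⟨d, hd, huniq, hs⟩
      · exact Or.inl ⟨Set.eq_empty_of_forall_notMem hleaf, hne⟩
      · refine Or.inr ⟨d, hPT hd, _, hs, by simp [hd], fun d' _ hd' => ?_⟩
        simpa using fun h => hd' (huniq d' h)
    · beta_reduce
      rw [if_neg hmP, B.toNPTA_sat_none_iff]
      intro d _
      simpa using fun h => hmP (hP m d h)
  · intro b _
    by_cases hbP : ∀ k, (List.range k).map b ∈ P
    · simpa [hbP] using hpar b hbP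
    · push Not at hbP
      obtain ⟨k, hk⟩ := hbP
      refine paritySeq_of_eventually_eq_zero k fun j hj => ?_
      have hj : (List.range j).map b ∉ P :=
        fun h => hk (hP.mem_of_prefix (List.map_range_prefix_map_range b hj) h)
      simp [hj]

lemma NPWA.toNPTA_accepts_of_acceptsInf (b : ℕ → D) (hb : ∀ k, (List.range k).map b ∈ T.nodes)
    (hacc : B.AcceptsInf fun k => T.label ((List.range k).map b)) :
    B.toNPTA.Accepts T := by
  obtain ⟨s, hs0, hstr, hspar⟩ := hacc
  have hP : ∀ m d, m ++ [d] ∈ {m | m = (List.range m.length).map b} ↔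
      m = (List.range m.length).map b ∧ d = b m.length := by
    intro m d
    simpa using List.append_singleton_eq_map_range_iff b m d
  refine B.toNPTA_accepts_of_chain T {m | m = (List.range m.length).map b} s
    (fun m hm => hm ▸ hb _) (fun m d h => ((hP m d).mp h).1) rfl hs0
    (fun m hm => Or.inr ⟨b m.length, (hP m _).mpr ⟨hm, rfl⟩,
      fun d' h => ((hP m d').mp h).2, ?_⟩) fun _ _ => hspar
  rw [hm]
  simpa using hstr m.length

lemma NPWA.toNPTA_accepts_of_acceptsFin (n : List D) (hn : n ∈ T.nodes)
    (hleaf : ∀ d, n ++ [d] ∉ T.nodes)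
    (hacc : B.AcceptsFin ((List.range (n.length + 1)).map fun k => T.label (n.take k))) :
    B.toNPTA.Accepts T := by
  obtain ⟨s, hs0, hstr⟩ := (B.acceptsFin_prefix_labels_iff T n).mp hacc
  refine B.toNPTA_accepts_of_chain T {m | m <+: n} s
    (fun m hm => T.prefixClosed_nodes.mem_of_prefix hm hn)
    (fun m d h => (List.prefix_append m [d]).trans h) List.nil_prefix hs0 ?_ ?_
  · intro m hm
    have hs := hstr m.length hm.length_le
    rw [← List.prefix_iff_eq_take.mp hm] at hs
    by_cases hmn : m = n
    · subst hmn
      exact Or.inl ⟨hleaf, _, hs⟩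
    · have hlt : m.length < n.length :=
        lt_of_le_of_ne hm.length_le fun h => hmn (hm.eq_of_length h)
      have hchild : m ++ [n[m.length]] <+: n := by
        have htake : n.take (m.length + 1) = m ++ [n[m.length]] := by
          rw [List.take_succ_eq_append_getElem hlt, ← List.prefix_iff_eq_take.mp hm]
        exact htake ▸ List.take_prefix _ n
      exact Or.inr ⟨n[m.length], hchild,
        fun d' hd' => List.append_singleton_prefix_unique hchild hd', hs⟩
  · intro b hb
    have := (hb (n.length + 1)).length_le
    simp at this

lemma NPWA.exists_accepted_branch_of_toNPTA_accepts (h : B.toNPTA.Accepts T) :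
    (∃ b : ℕ → D, (∀ k, (List.range k).map b ∈ T.nodes) ∧
        B.AcceptsInf (fun k => T.label ((List.range k).map b))) ∨
      ∃ n ∈ T.nodes, (∀ d, n ++ [d] ∉ T.nodes) ∧
        B.AcceptsFin ((List.range (n.length + 1)).map (fun k => T.label (n.take k))) := by
  obtain ⟨ρ, hρ0, hloc, hpar⟩ := h
  have htrans : ∀ m q d q', m ∈ T.nodes → ρ m = some q → m ++ [d] ∈ T.nodes →
      ρ (m ++ [d]) = some q' → q' ∈ B.δ q (T.label m) := by
    intro m q d q' hm hq hd hq'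
    have hlocm := hloc m hm
    rw [hq] at hlocm
    exact B.mem_δ_of_toNPTA_sat hlocm hd hq'
  have hstep : ∀ m, (m ∈ T.nodes ∧ ∃ q, ρ m = some q) →
      ((∀ d, m ++ [d] ∉ T.nodes) ∧ ∃ q, ρ m = some q ∧ (B.δ q (T.label m)).Nonempty) ∨
        ∃ d, m ++ [d] ∈ T.nodes ∧ ∃ q, ρ (m ++ [d]) = some q := by
    rintro m ⟨hm, q, hq⟩
    have hlocm := hloc m hm
    rw [hq, B.toNPTA_sat_some_iff] at hlocm
    rcases hlocm with ⟨hC, hne⟩ | ⟨d, hdC, q', -, hd, -⟩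
    · exact Or.inl ⟨fun d hd => (hC ▸ hd : d ∈ (∅ : Set D)), q, hq, hne⟩
    · exact Or.inr ⟨d, hdC, q', hd⟩
  rcases exists_branch_or_terminal _ _ ⟨T.root_mem, _, hρ0⟩ hstep with
    ⟨b, hb⟩ | ⟨n, ⟨hleaf, q, hq, q', hq'⟩, hgood⟩
  · choose s hs using fun k => (hb k).2
    refine Or.inl ⟨b, fun k => (hb k).1, s, ?_, fun k => ?_, ?_⟩
    · simpa [hρ0] using (hs 0).symm
    · have hsucc : (List.range (k + 1)).map b = (List.range k).map b ++ [b k] := by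
        simp [List.range_succ]
      exact htrans _ _ _ _ (hb k).1 (hs k) (hsucc ▸ (hb (k + 1)).1) (hsucc ▸ hs (k + 1))
    · simpa [hs] using hpar b fun k => (hb k).1
  · choose s hs using fun k => (hgood (n.take k) (List.take_prefix k n)).2
    have hqs : q = s n.length := by simpa [hq] using hs n.length
    refine Or.inr ⟨n, (hgood n (List.prefix_refl n)).1, hleaf,
      (B.acceptsFin_prefix_labels_iff T n).mpr
        ⟨fun k => if k ≤ n.length then s k else q', ?_, ?_⟩⟩
    · simpa [hρ0] using (hs 0).symm
    · intro k hk
      rcases hk.lt_or_eq with hlt | rfl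
      · have htake := List.take_succ_eq_append_getElem hlt
        simp only [hk, if_true, Nat.succ_le_of_lt hlt]
        exact htrans _ _ _ _ (hgood _ (List.take_prefix k n)).1 (hs k)
          (htake ▸ (hgood _ (List.take_prefix (k + 1) n)).1) (htake ▸ hs (k + 1))
      · simpa [← hqs] using hq'

end Acceptance

/-- for every non-alternating parity word automaton `B` there is a
non-alternating EU parity tree automaton `M` accepting exactly the trees
containing at least one branch (infinite, or finite maximal) whose word is
accepted by `B`; moreover `M` has one additional state beyond those of `B`, and
all its EU-pairs have existential parts of size at most 1 and universal parts of
size at most 1. -/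
theorem stmt15 (A : Type) (B : NPWA A) :
    ∃ M : NPTA A,
      Nonempty (M.Q ≃ Option B.Q) ∧
      (∀ q a, ∀ p ∈ M.δ q a, Multiset.card p.1 ≤ 1 ∧ p.2.Subsingleton) ∧
      (∀ (D : Type) (T : STree D A),
        M.Accepts T ↔
          ((∃ b : ℕ → D, (∀ k, (List.range k).map b ∈ T.nodes) ∧
              B.AcceptsInf (fun k => T.label ((List.range k).map b))) ∨
           (∃ n ∈ T.nodes, (∀ d, n ++ [d] ∉ T.nodes) ∧
              B.AcceptsFin
                ((List.range (n.length + 1)).map (fun k => T.label (n.take k)))))) := by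
  refine ⟨B.toNPTA, ⟨Equiv.refl _⟩,
    fun q _ p hp => B.card_le_one_and_subsingleton_of_mem_toNPTA_δ q p hp,
    fun D T => ⟨B.exists_accepted_branch_of_toNPTA_accepts T, ?_⟩⟩
  rintro (⟨b, hb, hacc⟩ | ⟨n, hn, hleaf, hacc⟩)
  exacts [B.toNPTA_accepts_of_acceptsInf T b hb hacc,
    B.toNPTA_accepts_of_acceptsFin T n hn hleaf hacc]
end
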